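/- Let H ∈ (1/2,1) and T > 0. There exists a constant c = c(H,T) > 0 such that for every integer n ≥ 1, ∫_0^T ∫_0^T R(u,v)^{n−1} u^{−Hn} v^{−Hn} du dv ≤ c · n^{−1/(2H)}. (This is the integral bound, cited from Eddahbi–Lacayo–Solé–Vives–Tudor, used to control the off-diagonal terms B(n) in the Sobolev–Watanabe norm of the fractional current.) -/

import Mathlib

/-!
Write `ρ = R(u,v) / (uv)^H`, so that the integrand is `ρ^(n-1) (uv)^(-H)`. The inequality
`(1 - 2^(H-1)) (t(1-t))^H ≤ t^H + (1-t)^H - 1` on `[0,1]`, applied to `t = v/u`, gives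
`ρ ≤ 1 - κ w^(2H)` with `w = |u-v| / max(u,v)` and `κ = (1 - 2^(H-1))/2`, hence by Bernoulli
`ρ^m ≤ (1 + mκ w^(2H))⁻¹`. Where `w ≥ 1/2` this is `O(1/m)` against the integrable `(uv)^(-H)`.
Where `w < 1/2`, `v` is comparable to `u` and `w ≥ |v-u|/(2u)`, so the `v`-integral is at most
`2u ∫ (1 + mκ|x|^(2H))⁻¹ dx = 2u (mκ)^(-1/(2H)) ∫ (1 + |x|^(2H))⁻¹ dx`, finite because `2H > 1`;
what is left, `u^(1-2H)`, is integrable because `H < 1`. Both `1/m` and `m^(-1/(2H))` are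
`O(n^(-1/(2H)))`.
-/

open MeasureTheory Real

noncomputable def fbmCov (H t s : ℝ) : ℝ :=
  (t ^ (2 * H) + s ^ (2 * H) - |t - s| ^ (2 * H)) / 2

open Set

lemma rpow_two_mul_eq_sq {x : ℝ} (hx : 0 ≤ x) (H : ℝ) : x ^ (2 * H) = (x ^ H) ^ 2 := by
  rw [mul_comm, rpow_mul hx, rpow_two]

lemma rpow_neg_mul_succ {x : ℝ} (hx : 0 < x) (H : ℝ) (m : ℕ) :
    x ^ (-(H * (m + 1 : ℕ))) = ((x ^ H) ^ m)⁻¹ * x ^ (-H) := by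
  rw [← rpow_natCast, ← rpow_mul hx.le, ← rpow_neg hx.le, ← rpow_add hx]
  push_cast
  ring_nf

lemma one_sub_two_rpow_mul_le_of_le_half {H t : ℝ} (hH : 0 < H) (hH1 : H ≤ 1) (ht : 0 ≤ t)
    (ht2 : t ≤ 1 / 2) :
    (1 - 2 ^ (H - 1)) * (t * (1 - t)) ^ H ≤ t ^ H + (1 - t) ^ H - 1 := by
  have h1t : 0 ≤ 1 - t := by linarith
  have hlin : 1 - t ≤ (1 - t) ^ H := by
    simpa using rpow_le_rpow_of_exponent_ge (x := 1 - t) (by linarith) (by linarith) hH1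
  have hsmall : t ≤ 2 ^ (H - 1) * t ^ H := by
    have hhalf : t ^ (1 - H) ≤ 2 ^ (H - 1) := by
      calc t ^ (1 - H) ≤ (1 / 2) ^ (1 - H) := rpow_le_rpow ht ht2 (by linarith)
        _ = 2 ^ (H - 1) := by
          rw [one_div, inv_rpow zero_le_two, ← rpow_neg zero_le_two, neg_sub]
    calc t = t ^ (1 - H) * t ^ H := by rw [← rpow_add' ht (by simp), sub_add_cancel, rpow_one]
      _ ≤ 2 ^ (H - 1) * t ^ H := by gcongr
  have hc : 0 ≤ 1 - (2 : ℝ) ^ (H - 1) := by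
    linarith [rpow_le_one_of_one_le_of_nonpos one_le_two (by linarith : H - 1 ≤ 0)]
  have hle1 : (1 - t) ^ H ≤ 1 := rpow_le_one h1t (by linarith) hH.le
  rw [mul_rpow ht h1t]
  nlinarith [mul_le_mul_of_nonneg_left hle1 (mul_nonneg hc (rpow_nonneg ht H))]

lemma one_sub_two_rpow_mul_le {H t : ℝ} (hH : 0 < H) (hH1 : H ≤ 1) (ht : 0 ≤ t) (ht1 : t ≤ 1) :
    (1 - 2 ^ (H - 1)) * (t * (1 - t)) ^ H ≤ t ^ H + (1 - t) ^ H - 1 := by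
  rcases le_total t (1 / 2) with h | h
  · exact one_sub_two_rpow_mul_le_of_le_half hH hH1 ht h
  · have := one_sub_two_rpow_mul_le_of_le_half hH hH1 (t := 1 - t) (by linarith) (by linarith)
    rw [sub_sub_cancel, mul_comm (1 - t)] at this
    linarith

lemma one_sub_pow_le_inv_one_add_mul {t : ℝ} (m : ℕ) (ht : 0 ≤ t) (ht1 : t ≤ 1) :
    (1 - t) ^ m ≤ (1 + m * t)⁻¹ := by
  rw [inv_eq_one_div, le_div_iff₀ (by positivity)]
  calc (1 - t) ^ m * (1 + m * t) ≤ (1 - t) ^ m * (1 + t) ^ m := by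
        gcongr
        exact one_add_mul_le_pow (by linarith) m
    _ = (1 - t ^ 2) ^ m := by rw [← mul_pow]; ring
    _ ≤ 1 := pow_le_one₀ (by nlinarith) (by nlinarith)

lemma rpow_neg_le_of_mul_le {a x y r s : ℝ} (ha : 0 < a) (hy : 1 ≤ y) (hx : a * y ≤ x)
    (hr : 0 ≤ r) (hsr : s ≤ r) : x ^ (-r) ≤ a ^ (-r) * y ^ (-s) :=
  calc x ^ (-r) ≤ (a * y) ^ (-r) := rpow_le_rpow_of_nonpos (by positivity) hx (by linarith)
    _ = a ^ (-r) * y ^ (-r) := mul_rpow ha.le (by linarith)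
    _ ≤ a ^ (-r) * y ^ (-s) := by gcongr

lemma abs_sub_div_max_le_one {u v : ℝ} (hu : 0 ≤ u) (hv : 0 ≤ v) : |u - v| / max u v ≤ 1 :=
  div_le_one_of_le₀
    (abs_sub_le_iff.2 ⟨by linarith [le_max_left u v], by linarith [le_max_right u v]⟩)
    (hu.trans (le_max_left u v))

lemma half_le_and_abs_div_le_of_abs_sub_div_max_lt_half {u v : ℝ} (hu : 0 < u)
    (h : |u - v| / max u v < 1 / 2) :
    u / 2 ≤ v ∧ |(v - u) / (2 * u)| ≤ |u - v| / max u v := by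
  have hmax : 0 < max u v := lt_max_of_lt_left hu
  rw [div_lt_iff₀ hmax] at h
  have hle : u / 2 ≤ v ∧ max u v ≤ 2 * u := by
    rcases le_total v u with huv | huv
    · rw [max_eq_left huv, abs_of_nonneg (by linarith)] at h
      rw [max_eq_left huv]
      constructor <;> linarith
    · rw [max_eq_right huv, abs_of_nonpos (by linarith)] at h
      rw [max_eq_right huv]
      constructor <;> linarith
  refine ⟨hle.1, ?_⟩
  rw [abs_div, abs_of_pos (by positivity : 0 < 2 * u), abs_sub_comm]
  exact div_le_div_of_nonneg_left (abs_nonneg _) hmax hle.2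

lemma integral_rpow_zero_left {r : ℝ} (hr : -1 < r) (b : ℝ) :
    ∫ x in (0 : ℝ)..b, x ^ r = b ^ (r + 1) / (r + 1) := by
  rw [integral_rpow (Or.inl hr), zero_rpow (ne_of_gt (by linarith)), sub_zero]

lemma intervalIntegral.integral_mono_of_nonneg_on {f g : ℝ → ℝ} {a b : ℝ} (hab : a ≤ b)
    (hf : ∀ x ∈ Ioc a b, 0 ≤ f x) (hg : IntervalIntegrable g volume a b)
    (hfg : ∀ x ∈ Ioc a b, f x ≤ g x) : ∫ x in a..b, f x ≤ ∫ x in a..b, g x := by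
  rw [intervalIntegral.integral_of_le hab, intervalIntegral.integral_of_le hab]
  exact integral_mono_of_nonneg (ae_restrict_of_forall_mem measurableSet_Ioc hf) hg.1
    (ae_restrict_of_forall_mem measurableSet_Ioc hfg)

noncomputable def fbmCorrGap (H : ℝ) : ℝ := (1 - 2 ^ (H - 1)) / 2

lemma fbmCorrGap_nonneg {H : ℝ} (hH1 : H ≤ 1) : 0 ≤ fbmCorrGap H := by
  have : (2 : ℝ) ^ (H - 1) ≤ 1 := rpow_le_one_of_one_le_of_nonpos one_le_two (by linarith)
  unfold fbmCorrGap
  linarith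

lemma fbmCorrGap_pos {H : ℝ} (hH : H < 1) : 0 < fbmCorrGap H := by
  have : (2 : ℝ) ^ (H - 1) < 1 := rpow_lt_one_of_one_lt_of_neg one_lt_two (by linarith)
  unfold fbmCorrGap
  linarith

lemma fbmCorrGap_lt_half (H : ℝ) : fbmCorrGap H < 1 / 2 := by
  have : (0 : ℝ) < 2 ^ (H - 1) := rpow_pos_of_pos two_pos _
  unfold fbmCorrGap
  linarith

lemma fbmCov_comm (H t s : ℝ) : fbmCov H t s = fbmCov H s t := by
  unfold fbmCov
  rw [abs_sub_comm]
  ring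

lemma fbmCov_mul_left {H a t s : ℝ} (ha : 0 ≤ a) (ht : 0 ≤ t) (hs : 0 ≤ s) :
    fbmCov H (a * t) (a * s) = a ^ (2 * H) * fbmCov H t s := by
  unfold fbmCov
  rw [← mul_sub, abs_mul, abs_of_nonneg ha, mul_rpow ha ht, mul_rpow ha hs,
    mul_rpow ha (abs_nonneg _)]
  ring

lemma fbmCov_nonneg {H t s : ℝ} (hH : 0 ≤ H) (ht : 0 ≤ t) (hs : 0 ≤ s) : 0 ≤ fbmCov H t s := by
  have hmax : |t - s| ^ (2 * H) ≤ max t s ^ (2 * H) :=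
    rpow_le_rpow (abs_nonneg _)
      (abs_sub_le_iff.2 ⟨by linarith [le_max_left t s], by linarith [le_max_right t s]⟩)
      (by linarith)
  have : max t s ^ (2 * H) ≤ t ^ (2 * H) + s ^ (2 * H) := by
    rcases le_total t s with h | h
    · rw [max_eq_right h]; linarith [rpow_nonneg ht (2 * H)]
    · rw [max_eq_left h]; linarith [rpow_nonneg hs (2 * H)]
  unfold fbmCov
  linarith

lemma fbmCov_one_le {H z : ℝ} (hH : 0 < H) (hH1 : H ≤ 1) (hz : 0 ≤ z) (hz1 : z ≤ 1) :
    fbmCov H 1 z ≤ z ^ H * (1 - fbmCorrGap H * (1 - z) ^ (2 * H)) := by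
  have h1z : 0 ≤ 1 - z := by linarith
  have key := one_sub_two_rpow_mul_le hH hH1 hz hz1
  rw [mul_rpow hz h1z] at key
  have ha0 := rpow_nonneg hz H
  have ha1 : z ^ H ≤ 1 := rpow_le_one hz hz1 hH.le
  have hb0 := rpow_nonneg h1z H
  have hc0 : 0 ≤ 1 - (2 : ℝ) ^ (H - 1) := by
    linarith [rpow_le_one_of_one_le_of_nonpos one_le_two (by linarith : H - 1 ≤ 0)]
  -- With `a = z^H`, `b = (1-z)^H`, `c = 1 - 2^(H-1)`, the claim is `(1-a)^2 ≤ b^2 (1 - ca)`,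
  -- which follows by squaring `key` in the form `1 - a ≤ b (1 - ca)`.
  have hca : (1 - 2 ^ (H - 1)) * z ^ H ≤ 1 := by nlinarith [rpow_pos_of_pos two_pos (H - 1)]
  have key' : 1 - z ^ H ≤ (1 - z) ^ H * (1 - (1 - 2 ^ (H - 1)) * z ^ H) := by nlinarith
  have hsq : (1 - z ^ H) ^ 2 ≤ ((1 - z) ^ H) ^ 2 * (1 - (1 - 2 ^ (H - 1)) * z ^ H) := by
    nlinarith [mul_le_mul key' key' (by linarith) (mul_nonneg hb0 (sub_nonneg.2 hca)),
      mul_nonneg (mul_nonneg (sq_nonneg ((1 - z) ^ H)) (sub_nonneg.2 hca))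
        (mul_nonneg hc0 ha0)]
  unfold fbmCov fbmCorrGap
  rw [one_rpow, abs_of_nonneg h1z, rpow_two_mul_eq_sq hz, rpow_two_mul_eq_sq h1z]
  nlinarith

lemma fbmCov_le_of_le {H u v : ℝ} (hH : 0 < H) (hH1 : H ≤ 1) (hu : 0 < u) (hv : 0 ≤ v)
    (hvu : v ≤ u) :
    fbmCov H u v ≤ u ^ H * v ^ H * (1 - fbmCorrGap H * ((u - v) / u) ^ (2 * H)) := by
  have hz : 0 ≤ v / u := div_nonneg hv hu.le
  have hscale : fbmCov H u v = u ^ (2 * H) * fbmCov H 1 (v / u) := by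
    rw [← fbmCov_mul_left hu.le zero_le_one hz, mul_one, mul_div_cancel₀ _ hu.ne']
  have hprod : u ^ (2 * H) * (v / u) ^ H = u ^ H * v ^ H := by
    rw [div_rpow hv hu.le, rpow_two_mul_eq_sq hu.le]
    field_simp [(rpow_pos_of_pos hu H).ne']
  rw [hscale, ← hprod, mul_assoc, ← one_sub_div hu.ne']
  exact mul_le_mul_of_nonneg_left (fbmCov_one_le hH hH1 hz (div_le_one_of_le₀ hvu hu.le))
    (rpow_nonneg hu.le _)

lemma fbmCov_le {H u v : ℝ} (hH : 0 < H) (hH1 : H ≤ 1) (hu : 0 < u) (hv : 0 < v) :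
    fbmCov H u v ≤ u ^ H * v ^ H * (1 - fbmCorrGap H * (|u - v| / max u v) ^ (2 * H)) := by
  rcases le_total v u with h | h
  · rw [max_eq_left h, abs_of_nonneg (by linarith)]
    exact fbmCov_le_of_le hH hH1 hu hv.le h
  · rw [max_eq_right h, abs_sub_comm, abs_of_nonneg (by linarith), fbmCov_comm, mul_comm (u ^ H)]
    exact fbmCov_le_of_le hH hH1 hv hu.le h

noncomputable def decayKernel (p μ x : ℝ) : ℝ := (1 + μ * |x| ^ p)⁻¹

lemma decayKernel_nonneg {p μ : ℝ} (hμ : 0 ≤ μ) (x : ℝ) : 0 ≤ decayKernel p μ x := by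
  unfold decayKernel
  positivity

lemma decayKernel_anti {p μ x y : ℝ} (hp : 0 ≤ p) (hμ : 0 ≤ μ) (hxy : |x| ≤ |y|) :
    decayKernel p μ y ≤ decayKernel p μ x := by
  unfold decayKernel
  gcongr

lemma decayKernel_le_of_half_le {p μ x : ℝ} (hp : 0 ≤ p) (hp2 : p ≤ 2) (hμ : 0 < μ)
    (hx : 1 / 2 ≤ |x|) : decayKernel p μ x ≤ 4 / μ := by
  have hquarter : 1 / 4 ≤ |x| ^ p :=
    calc (1 : ℝ) / 4 = (1 / 2) ^ (2 : ℝ) := by norm_num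
      _ ≤ (1 / 2) ^ p := rpow_le_rpow_of_exponent_ge (by norm_num) (by norm_num) hp2
      _ ≤ |x| ^ p := rpow_le_rpow (by norm_num) hx hp
  unfold decayKernel
  rw [← inv_div]
  exact inv_anti₀ (by positivity) (by nlinarith)

lemma decayKernel_eq_one_comp_mul {p μ : ℝ} (hp : 0 < p) (hμ : 0 < μ) (x : ℝ) :
    decayKernel p μ x = decayKernel p 1 (μ ^ (1 / p) * x) := by
  unfold decayKernel
  rw [abs_mul, abs_of_pos (rpow_pos_of_pos hμ _), mul_rpow (rpow_nonneg hμ.le _) (abs_nonneg x),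
    ← rpow_mul hμ.le, one_div_mul_cancel hp.ne', rpow_one, one_mul]

lemma integrable_decayKernel_one {p : ℝ} (hp : 1 < p) : Integrable (decayKernel p 1) := by
  have hdom (x : ℝ) : decayKernel p 1 x ≤ 2 ^ (p - 1) * (1 + ‖x‖) ^ (-p) := by
    have h : (1 + ‖x‖) ^ p ≤ 2 ^ (p - 1) * (1 + ‖x‖ ^ p) := by
      have := NNReal.rpow_add_le_mul_rpow_add_rpow 1 ‖x‖₊ hp.le
      rw [NNReal.one_rpow] at this
      exact_mod_cast this
    rw [Real.norm_eq_abs] at h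
    unfold decayKernel
    rw [Real.norm_eq_abs, rpow_neg (by positivity), one_mul, ← div_eq_mul_inv,
      le_div_iff₀ (by positivity), inv_mul_le_iff₀ (by positivity)]
    linarith
  refine ((integrable_one_add_norm (by simpa using hp)).const_mul (2 ^ (p - 1))).mono'
    (by unfold decayKernel; fun_prop : Measurable _).aestronglyMeasurable
    (ae_of_all _ fun x => ?_)
  rw [Real.norm_of_nonneg (decayKernel_nonneg zero_le_one x)]
  exact hdom x

lemma integrable_decayKernel {p μ : ℝ} (hp : 1 < p) (hμ : 0 < μ) :
    Integrable (decayKernel p μ) := by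
  convert (integrable_decayKernel_one hp).comp_mul_left' (rpow_pos_of_pos hμ (1 / p)).ne' using 1
  funext x
  exact decayKernel_eq_one_comp_mul (by linarith) hμ x

lemma integral_decayKernel {p μ : ℝ} (hp : 0 < p) (hμ : 0 < μ) :
    ∫ x, decayKernel p μ x = μ ^ (-(1 / p)) * ∫ x, decayKernel p 1 x := by
  simp_rw [decayKernel_eq_one_comp_mul hp hμ]
  rw [Measure.integral_comp_mul_left, smul_eq_mul, abs_of_pos (by positivity),
    ← rpow_neg hμ.le]

lemma intervalIntegral_decayKernel_le {p μ a b c d : ℝ} (hp : 1 < p) (hμ : 0 < μ) (hab : a ≤ b)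
    (hd : 0 < d) :
    ∫ v in a..b, decayKernel p μ ((v - c) / d) ≤ d * μ ^ (-(1 / p)) * ∫ x, decayKernel p 1 x := by
  have hint : Integrable (fun v => decayKernel p μ ((v - c) / d)) :=
    ((integrable_decayKernel hp hμ).comp_div hd.ne').comp_sub_right c
  rw [intervalIntegral.integral_of_le hab]
  calc ∫ v in Ioc a b, decayKernel p μ ((v - c) / d) ≤ ∫ v, decayKernel p μ ((v - c) / d) :=
        setIntegral_le_integral hint (ae_of_all _ fun v => decayKernel_nonneg hμ.le _)
    _ = d * μ ^ (-(1 / p)) * ∫ x, decayKernel p 1 x := by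
        rw [integral_sub_right_eq_self (fun v => decayKernel p μ (v / d)) c,
          Measure.integral_comp_div, integral_decayKernel (by linarith) hμ, smul_eq_mul,
          abs_of_pos hd, mul_assoc]

noncomputable def fbmKernel (H : ℝ) (n : ℕ) (u v : ℝ) : ℝ :=
  fbmCov H u v ^ (n - 1) * u ^ (-(H * n)) * v ^ (-(H * n))

lemma fbmKernel_nonneg {H u v : ℝ} (n : ℕ) (hH : 0 ≤ H) (hu : 0 ≤ u) (hv : 0 ≤ v) :
    0 ≤ fbmKernel H n u v := by
  unfold fbmKernel
  have := fbmCov_nonneg hH hu hv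
  positivity

lemma fbmKernel_one (H u v : ℝ) : fbmKernel H 1 u v = u ^ (-H) * v ^ (-H) := by
  simp [fbmKernel]

lemma fbmKernel_succ_le {H u v τ : ℝ} (m : ℕ) (hH : 0 ≤ H) (hu : 0 < u) (hv : 0 < v)
    (hτ : 0 ≤ τ) (hτ1 : τ ≤ 1) (hcov : fbmCov H u v ≤ u ^ H * v ^ H * (1 - τ)) :
    fbmKernel H (m + 1) u v ≤ u ^ (-H) * v ^ (-H) * (1 + m * τ)⁻¹ := by
  have hA : 0 < u ^ H * v ^ H := by positivity
  have hρ0 : 0 ≤ fbmCov H u v / (u ^ H * v ^ H) := div_nonneg (fbmCov_nonneg hH hu.le hv.le) hA.le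
  have hρ : fbmCov H u v / (u ^ H * v ^ H) ≤ 1 - τ := by rwa [div_le_iff₀' hA]
  have heq : fbmKernel H (m + 1) u v
      = u ^ (-H) * v ^ (-H) * (fbmCov H u v / (u ^ H * v ^ H)) ^ m := by
    rw [fbmKernel, rpow_neg_mul_succ hu, rpow_neg_mul_succ hv, Nat.add_sub_cancel, div_pow,
      mul_pow]
    ring
  rw [heq]
  gcongr
  exact (pow_le_pow_left₀ hρ0 hρ m).trans (one_sub_pow_le_inv_one_add_mul m hτ (by linarith))

lemma fbmKernel_succ_le_decayKernel {H u v : ℝ} (m : ℕ) (hH : 0 < H) (hH1 : H ≤ 1) (hu : 0 < u)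
    (hv : 0 < v) :
    fbmKernel H (m + 1) u v
      ≤ u ^ (-H) * v ^ (-H) * decayKernel (2 * H) (m * fbmCorrGap H) (|u - v| / max u v) := by
  set w := |u - v| / max u v
  have hw0 : 0 ≤ w := by positivity
  have hw1 : w ^ (2 * H) ≤ 1 := rpow_le_one hw0 (abs_sub_div_max_le_one hu.le hv.le) (by linarith)
  have hτ1 : fbmCorrGap H * w ^ (2 * H) ≤ 1 := by
    nlinarith [fbmCorrGap_nonneg hH1, fbmCorrGap_lt_half H]
  have := fbmKernel_succ_le m hH.le hu hv
    (mul_nonneg (fbmCorrGap_nonneg hH1) (rpow_nonneg hw0 _)) hτ1 (fbmCov_le hH hH1 hu hv)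
  rwa [decayKernel, abs_of_nonneg hw0, mul_assoc (m : ℝ)]

lemma fbmKernel_succ_le_add {H u v : ℝ} {m : ℕ} (hH : 0 < H) (hH1 : H < 1) (hm : m ≠ 0)
    (hu : 0 < u) (hv : 0 < v) :
    fbmKernel H (m + 1) u v ≤ 4 / (m * fbmCorrGap H) * (u ^ (-H) * v ^ (-H))
      + 2 ^ H * u ^ (-(2 * H)) * decayKernel (2 * H) (m * fbmCorrGap H) ((v - u) / (2 * u)) := by
  set μ := m * fbmCorrGap H
  have hμ : 0 < μ := mul_pos (by positivity) (fbmCorrGap_pos hH1)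
  set w := |u - v| / max u v
  have hbase := fbmKernel_succ_le_decayKernel m hH hH1.le hu hv
  have hnear_nonneg : 0 ≤ 2 ^ H * u ^ (-(2 * H)) * decayKernel (2 * H) μ ((v - u) / (2 * u)) :=
    mul_nonneg (by positivity) (decayKernel_nonneg hμ.le _)
  by_cases hw : 1 / 2 ≤ w
  · have hfar := decayKernel_le_of_half_le (p := 2 * H) (by linarith) (by linarith) hμ
      (hw.trans (le_abs_self w))
    calc fbmKernel H (m + 1) u v ≤ u ^ (-H) * v ^ (-H) * decayKernel (2 * H) μ w := hbase
      _ ≤ u ^ (-H) * v ^ (-H) * (4 / μ) := by gcongr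
      _ ≤ _ := by linarith
  · obtain ⟨hv2, hx⟩ := half_le_and_abs_div_le_of_abs_sub_div_max_lt_half hu (not_le.1 hw)
    have hvH : v ^ (-H) ≤ 2 ^ H * u ^ (-H) :=
      calc v ^ (-H) ≤ (u / 2) ^ (-H) := rpow_le_rpow_of_nonpos (by positivity) hv2 (by linarith)
        _ = 2 ^ H * u ^ (-H) := by
          rw [div_rpow hu.le zero_le_two, rpow_neg zero_le_two, div_inv_eq_mul, mul_comm]
    have huu : u ^ (-H) * u ^ (-H) = u ^ (-(2 * H)) := by
      rw [← rpow_add hu]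
      ring_nf
    calc fbmKernel H (m + 1) u v ≤ u ^ (-H) * v ^ (-H) * decayKernel (2 * H) μ w := hbase
      _ ≤ u ^ (-H) * (2 ^ H * u ^ (-H)) * decayKernel (2 * H) μ ((v - u) / (2 * u)) := by
        gcongr
        · exact decayKernel_nonneg hμ.le _
        · exact decayKernel_anti (by linarith) hμ.le (hx.trans (le_abs_self w))
      _ = 2 ^ H * u ^ (-(2 * H)) * decayKernel (2 * H) μ ((v - u) / (2 * u)) := by
        rw [← huu]
        ring
      _ ≤ _ := le_add_of_nonneg_left (by positivity)

lemma integral_fbmKernel_succ_le {H T u : ℝ} {m : ℕ} (hH : 1 / 2 < H) (hH1 : H < 1) (hm : m ≠ 0)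
    (hT : 0 ≤ T) (hu : 0 < u) :
    ∫ v in (0 : ℝ)..T, fbmKernel H (m + 1) u v
      ≤ 4 / (m * fbmCorrGap H) * (T ^ (1 - H) / (1 - H)) * u ^ (-H)
        + 2 ^ (H + 1) * (m * fbmCorrGap H) ^ (-(1 / (2 * H)))
          * (∫ x, decayKernel (2 * H) 1 x) * u ^ (1 - 2 * H) := by
  set μ := m * fbmCorrGap H
  have hμ : 0 < μ := mul_pos (by positivity) (fbmCorrGap_pos hH1)
  have hrpow : IntervalIntegrable (fun v : ℝ => v ^ (-H)) volume 0 T :=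
    intervalIntegral.intervalIntegrable_rpow' (by linarith)
  have hdecay :
      IntervalIntegrable (fun v => decayKernel (2 * H) μ ((v - u) / (2 * u))) volume 0 T :=
    (((integrable_decayKernel (by linarith) hμ).comp_div (by positivity)).comp_sub_right
      u).intervalIntegrable
  calc ∫ v in (0 : ℝ)..T, fbmKernel H (m + 1) u v
      ≤ ∫ v in (0 : ℝ)..T, (4 / μ * u ^ (-H) * v ^ (-H)
          + 2 ^ H * u ^ (-(2 * H)) * decayKernel (2 * H) μ ((v - u) / (2 * u))) := by
        refine intervalIntegral.integral_mono_of_nonneg_on hT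
          (fun v hv => fbmKernel_nonneg _ (by linarith) hu.le hv.1.le)
          ((hrpow.const_mul _).add (hdecay.const_mul _)) fun v hv => ?_
        rw [mul_assoc (4 / μ)]
        exact fbmKernel_succ_le_add (by linarith) hH1 hm hu hv.1
    _ = 4 / μ * u ^ (-H) * (T ^ (1 - H) / (1 - H)) + 2 ^ H * u ^ (-(2 * H))
          * ∫ v in (0 : ℝ)..T, decayKernel (2 * H) μ ((v - u) / (2 * u)) := by
        rw [intervalIntegral.integral_add (hrpow.const_mul _) (hdecay.const_mul _),
          intervalIntegral.integral_const_mul, intervalIntegral.integral_const_mul,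
          integral_rpow_zero_left (by linarith), neg_add_eq_sub]
    _ ≤ 4 / μ * u ^ (-H) * (T ^ (1 - H) / (1 - H)) + 2 ^ H * u ^ (-(2 * H))
          * (2 * u * μ ^ (-(1 / (2 * H))) * ∫ x, decayKernel (2 * H) 1 x) := by
        gcongr
        exact intervalIntegral_decayKernel_le (by linarith) hμ hT (by positivity)
    _ = _ := by
        rw [show 1 - 2 * H = -(2 * H) + 1 by ring, rpow_add_one hu.ne', rpow_add_one two_ne_zero]
        ring

lemma integral_integral_fbmKernel_one {H : ℝ} (hH1 : H < 1) (T : ℝ) :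
    ∫ u in (0 : ℝ)..T, ∫ v in (0 : ℝ)..T, fbmKernel H 1 u v = (T ^ (1 - H) / (1 - H)) ^ 2 := by
  simp_rw [fbmKernel_one, intervalIntegral.integral_const_mul, intervalIntegral.integral_mul_const,
    integral_rpow_zero_left (by linarith : -1 < -H), neg_add_eq_sub]
  ring

lemma integral_integral_fbmKernel_succ_le {H T : ℝ} {m : ℕ} (hH : 1 / 2 < H) (hH1 : H < 1)
    (hm : m ≠ 0) (hT : 0 ≤ T) :
    ∫ u in (0 : ℝ)..T, ∫ v in (0 : ℝ)..T, fbmKernel H (m + 1) u v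
      ≤ 4 / (m * fbmCorrGap H) * (T ^ (1 - H) / (1 - H)) ^ 2
        + 2 ^ (H + 1) * (m * fbmCorrGap H) ^ (-(1 / (2 * H)))
          * (∫ x, decayKernel (2 * H) 1 x) * (T ^ (2 - 2 * H) / (2 - 2 * H)) := by
  set A := 4 / (m * fbmCorrGap H) * (T ^ (1 - H) / (1 - H))
  set B := 2 ^ (H + 1) * (m * fbmCorrGap H) ^ (-(1 / (2 * H))) * ∫ x, decayKernel (2 * H) 1 x
  have hrpow₁ : IntervalIntegrable (fun u : ℝ => u ^ (-H)) volume 0 T :=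
    intervalIntegral.intervalIntegrable_rpow' (by linarith)
  have hrpow₂ : IntervalIntegrable (fun u : ℝ => u ^ (1 - 2 * H)) volume 0 T :=
    intervalIntegral.intervalIntegrable_rpow' (by linarith)
  calc ∫ u in (0 : ℝ)..T, ∫ v in (0 : ℝ)..T, fbmKernel H (m + 1) u v
      ≤ ∫ u in (0 : ℝ)..T, (A * u ^ (-H) + B * u ^ (1 - 2 * H)) :=
        intervalIntegral.integral_mono_of_nonneg_on hT
          (fun u hu => intervalIntegral.integral_nonneg hT fun v hv =>
            fbmKernel_nonneg _ (by linarith) hu.1.le hv.1)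
          ((hrpow₁.const_mul A).add (hrpow₂.const_mul B))
          fun u hu => integral_fbmKernel_succ_le hH hH1 hm hT hu.1
    _ = _ := by
        rw [intervalIntegral.integral_add (hrpow₁.const_mul A) (hrpow₂.const_mul B),
          intervalIntegral.integral_const_mul, intervalIntegral.integral_const_mul,
          integral_rpow_zero_left (by linarith), integral_rpow_zero_left (by linarith),
          neg_add_eq_sub, show 1 - 2 * H + 1 = 2 - 2 * H by ring]
        ring

noncomputable def fbmBoundConst (H T : ℝ) : ℝ :=
  8 / fbmCorrGap H * (T ^ (1 - H) / (1 - H)) ^ 2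
    + 2 ^ (H + 1) * (fbmCorrGap H / 2) ^ (-(1 / (2 * H))) * (∫ x, decayKernel (2 * H) 1 x)
      * (T ^ (2 - 2 * H) / (2 - 2 * H))

lemma fbmBoundConst_nonneg {H T : ℝ} (hH1 : H < 1) (hT : 0 ≤ T) : 0 ≤ fbmBoundConst H T := by
  have := fbmCorrGap_pos hH1
  have : 0 ≤ ∫ x, decayKernel (2 * H) 1 x :=
    integral_nonneg fun x => decayKernel_nonneg zero_le_one x
  have : 0 < 1 - H := by linarith
  have : 0 < 2 - 2 * H := by linarith
  unfold fbmBoundConst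
  positivity

lemma integral_integral_fbmKernel_le {H T : ℝ} {n : ℕ} (hH : 1 / 2 < H) (hH1 : H < 1)
    (hn : 2 ≤ n) (hT : 0 ≤ T) :
    ∫ u in (0 : ℝ)..T, ∫ v in (0 : ℝ)..T, fbmKernel H n u v
      ≤ fbmBoundConst H T * (n : ℝ) ^ (-(1 / (2 * H))) := by
  obtain ⟨m, rfl⟩ := Nat.exists_eq_add_of_le' (one_le_two.trans hn)
  set s := 1 / (2 * H)
  set κ := fbmCorrGap H
  have hκ : 0 < κ := fbmCorrGap_pos hH1
  have hm : (1 : ℝ) ≤ m := by exact_mod_cast Nat.le_of_succ_le_succ hn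
  have hn1 : (1 : ℝ) ≤ (m + 1 : ℕ) := by push_cast; linarith
  have hlow : κ / 2 * (m + 1 : ℕ) ≤ m * κ := by push_cast; nlinarith
  have hs : s ≤ 1 := by rw [div_le_one (by linarith)]; linarith
  have hrate₁ := rpow_neg_le_of_mul_le (by positivity) hn1 hlow zero_le_one hs
  have hrate₂ := rpow_neg_le_of_mul_le (r := s) (by positivity) hn1 hlow (by positivity) le_rfl
  rw [rpow_neg_one, rpow_neg_one, inv_div] at hrate₁
  calc _ ≤ 4 / (m * κ) * (T ^ (1 - H) / (1 - H)) ^ 2 + 2 ^ (H + 1) * (m * κ) ^ (-s)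
          * (∫ x, decayKernel (2 * H) 1 x) * (T ^ (2 - 2 * H) / (2 - 2 * H)) :=
        integral_integral_fbmKernel_succ_le hH hH1 (by omega) hT
    _ ≤ 2 / κ * ((m + 1 : ℕ) : ℝ) ^ (-s) * 4 * (T ^ (1 - H) / (1 - H)) ^ 2
        + 2 ^ (H + 1) * ((κ / 2) ^ (-s) * ((m + 1 : ℕ) : ℝ) ^ (-s))
          * (∫ x, decayKernel (2 * H) 1 x) * (T ^ (2 - 2 * H) / (2 - 2 * H)) := by
        rw [div_eq_mul_inv 4, mul_comm 4]
        gcongr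
        · exact div_nonneg (rpow_nonneg hT _) (by linarith)
        · exact integral_nonneg fun x => decayKernel_nonneg zero_le_one x
    _ = fbmBoundConst H T * ((m + 1 : ℕ) : ℝ) ^ (-s) := by
        unfold fbmBoundConst
        ring

/-- for `H ∈ (1/2,1)` and `T > 0`, there is `c = c(H,T) > 0` such that for
every `n ≥ 1`, `∫_0^T ∫_0^T R(u,v)^{n−1} u^{−Hn} v^{−Hn} du dv ≤ c · n^{−1/(2H)}`. -/
theorem fbm_covariance_integral_bound
    (H T : ℝ) (hH : 1 / 2 < H) (hH1 : H < 1) (hT : 0 < T) :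
    ∃ c : ℝ, 0 < c ∧ ∀ n : ℕ, 1 ≤ n →
      ∫ u in (0 : ℝ)..T, ∫ v in (0 : ℝ)..T,
        (fbmCov H u v) ^ (n - 1) * u ^ (-(H * n)) * v ^ (-(H * n))
      ≤ c * (n : ℝ) ^ (-(1 / (2 * H))) := by
  have hK : 0 < (T ^ (1 - H) / (1 - H)) ^ 2 :=
    pow_pos (div_pos (rpow_pos_of_pos hT _) (by linarith)) 2
  have hc := fbmBoundConst_nonneg hH1 hT.le
  refine ⟨_ + fbmBoundConst H T, add_pos_of_pos_of_nonneg hK hc, fun n hn => ?_⟩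
  change ∫ u in (0 : ℝ)..T, ∫ v in (0 : ℝ)..T, fbmKernel H n u v ≤ _
  rcases hn.eq_or_lt with rfl | hn
  · rw [integral_integral_fbmKernel_one hH1, Nat.cast_one, one_rpow, mul_one]
    linarith
  · have hns : 0 ≤ (n : ℝ) ^ (-(1 / (2 * H))) := by positivity
    nlinarith [integral_integral_fbmKernel_le hH hH1 hn hT.le]
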